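/- Let f be a system of n homogeneous polynomials on S^n with maximal degree D, and x ∈ S^n with f(x) ≠ 0. Then f has no zero in the open ball B(x, r) where r = min{‖f(x)‖_∞ / (‖f‖√D), √2}. -/

import Mathlib

open MvPolynomial Finset
open scoped RealInnerProductSpace

/-- The Bombieri–Weyl inner product on (homogeneous) polynomials. -/
noncomputable def bwInner {m : ℕ} (g h : MvPolynomial (Fin m) ℝ) : ℝ :=
  ∑ J ∈ g.support ∪ h.support,
    g.coeff J * h.coeff J / (Nat.multinomial Finset.univ J : ℝ)

/-- The Bombieri–Weyl norm. -/
noncomputable def bwNorm {m : ℕ} (g : MvPolynomial (Fin m) ℝ) : ℝ :=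
  Real.sqrt (bwInner g g)

/-! On forms of degree `k` the functional `g ↦ g x - g y` is represented, for the Bombieri–Weyl
inner product, by `⟪x, ·⟫ ^ k - ⟪y, ·⟫ ^ k`, whose squared norm is `2 - 2 ⟪x, y⟫ ^ k` by the
multinomial theorem. Cauchy–Schwarz, Bernoulli's inequality and `1 - cos θ ≤ θ ^ 2 / 2` then give
`|g x - g y| ≤ ‖g‖ √k θ` for unit vectors at angle `θ`. At a zero `y` of `f`, the component of `f`
attaining `‖f x‖_∞` forces `‖f x‖_∞ ≤ ‖f‖ √D θ`. -/

theorem Finset.sum_pow_eq_sum_finsuppAntidiag {ι R : Type*} [Fintype ι] [DecidableEq ι]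
    [CommSemiring R] (v : ι → R) (k : ℕ) :
    (∑ i, v i) ^ k =
      ∑ J ∈ finsuppAntidiag univ k, (Nat.multinomial univ J : R) * ∏ i, v i ^ J i := by
  rw [sum_pow_eq_sum_piAntidiag, finsuppAntidiag, sum_map, ← sum_attach]
  rfl

theorem Finset.sum_multinomial_mul_prod_pow_mul_prod_pow {ι R : Type*} [Fintype ι] [DecidableEq ι]
    [CommSemiring R] (x y : ι → R) (k : ℕ) :
    ∑ J ∈ finsuppAntidiag univ k,
        (Nat.multinomial univ J : R) * ((∏ i, x i ^ J i) * ∏ i, y i ^ J i) =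
      (∑ i, x i * y i) ^ k := by
  simp_rw [sum_pow_eq_sum_finsuppAntidiag, mul_pow, prod_mul_distrib]

namespace MvPolynomial.IsHomogeneous

variable {σ R : Type*} [Fintype σ] [DecidableEq σ] [CommSemiring R] {φ : MvPolynomial σ R} {k : ℕ}

theorem support_subset_finsuppAntidiag (hφ : φ.IsHomogeneous k) :
    φ.support ⊆ finsuppAntidiag univ k := by
  intro J hJ
  rw [mem_finsuppAntidiag, hφ.degree_eq_sum_deg_support hJ]
  exact ⟨(sum_subset (subset_univ _) fun i _ hi => Finsupp.notMem_support_iff.1 hi).symm,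
    subset_univ _⟩

theorem eval_eq_sum_finsuppAntidiag (hφ : φ.IsHomogeneous k) (v : σ → R) :
    eval v φ = ∑ J ∈ finsuppAntidiag univ k, φ.coeff J * ∏ i, v i ^ J i := by
  rw [eval_eq']
  exact sum_subset hφ.support_subset_finsuppAntidiag fun J _ hJ => by
    rw [notMem_support_iff.1 hJ, zero_mul]

end MvPolynomial.IsHomogeneous

section BombieriWeyl

variable {m k : ℕ} {g : MvPolynomial (Fin m) ℝ}

theorem bwInner_self_nonneg (g : MvPolynomial (Fin m) ℝ) : 0 ≤ bwInner g g :=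
  sum_nonneg fun _ _ => div_nonneg (mul_self_nonneg _) (Nat.cast_nonneg _)

theorem bwNorm_nonneg (g : MvPolynomial (Fin m) ℝ) : 0 ≤ bwNorm g :=
  Real.sqrt_nonneg _

theorem bwNorm_sq (g : MvPolynomial (Fin m) ℝ) : bwNorm g ^ 2 = bwInner g g :=
  Real.sq_sqrt (bwInner_self_nonneg g)

theorem bwInner_self_eq_sum_finsuppAntidiag (hg : g.IsHomogeneous k) :
    bwInner g g = ∑ J ∈ finsuppAntidiag univ k, g.coeff J ^ 2 / Nat.multinomial univ J := by
  simp_rw [bwInner, union_self, ← sq]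
  exact sum_subset hg.support_subset_finsuppAntidiag fun J _ hJ => by
    simp [notMem_support_iff.1 hJ]

theorem sq_eval_sub_eval_le (hg : g.IsHomogeneous k) (x y : Fin m → ℝ) :
    (eval x g - eval y g) ^ 2 ≤ bwNorm g ^ 2 *
      ((∑ i, x i * x i) ^ k - 2 * (∑ i, x i * y i) ^ k + (∑ i, y i * y i) ^ k) := by
  set T := finsuppAntidiag (univ : Finset (Fin m)) k
  set M : (Fin m →₀ ℕ) → ℝ := fun J => Nat.multinomial univ J
  set mono : (Fin m → ℝ) → (Fin m →₀ ℕ) → ℝ := fun v J => ∏ i, v i ^ J i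
  have hM (J) : 0 < M J := Nat.cast_pos.2 (Nat.multinomial_pos _ _)
  calc (eval x g - eval y g) ^ 2 = (∑ J ∈ T, g.coeff J * (mono x J - mono y J)) ^ 2 := by
        simp_rw [hg.eval_eq_sum_finsuppAntidiag, mul_sub, sum_sub_distrib]
        rfl
    _ ≤ (∑ J ∈ T, g.coeff J ^ 2 / M J) * ∑ J ∈ T, M J * (mono x J - mono y J) ^ 2 := by
        refine sum_sq_le_sum_mul_sum_of_sq_le_mul T (fun _ _ => by positivity)
          (fun _ _ => by positivity) fun J _ => le_of_eq ?_
        field_simp [(hM J).ne']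
    _ = _ := by
        rw [bwNorm_sq, bwInner_self_eq_sum_finsuppAntidiag hg]
        congr 1
        simp_rw [← sum_multinomial_mul_prod_pow_mul_prod_pow, mul_sum, ← sum_sub_distrib,
          ← sum_add_distrib]
        exact sum_congr rfl fun J _ => by ring

end BombieriWeyl

theorem one_sub_cos_pow_le (θ : ℝ) (k : ℕ) : 1 - Real.cos θ ^ k ≤ k * θ ^ 2 / 2 := by
  have bernoulli := one_add_mul_sub_le_pow (Real.neg_one_le_cos θ) k
  calc 1 - Real.cos θ ^ k ≤ k * (1 - Real.cos θ) := by linarith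
    _ ≤ k * (θ ^ 2 / 2) := by gcongr; linarith [Real.one_sub_sq_div_two_le_cos (x := θ)]
    _ = k * θ ^ 2 / 2 := by ring

theorem EuclideanSpace.sum_mul_eq_inner {ι : Type*} [Fintype ι] (u v : EuclideanSpace ℝ ι) :
    ∑ i, u i * v i = ⟪u, v⟫ := by
  simp [PiLp.inner_apply, mul_comm]

theorem abs_eval_sub_eval_le_mul_arccos_inner {m k : ℕ} {g : MvPolynomial (Fin m) ℝ}
    (hg : g.IsHomogeneous k) {x y : EuclideanSpace ℝ (Fin m)} (hx : ‖x‖ = 1) (hy : ‖y‖ = 1) :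
    |eval (fun j => x j) g - eval (fun j => y j) g| ≤
      bwNorm g * Real.sqrt k * Real.arccos ⟪x, y⟫ := by
  have hxy : |⟪x, y⟫| ≤ 1 := by simpa [hx, hy] using abs_real_inner_le_norm x y
  have hcos : Real.cos (Real.arccos ⟪x, y⟫) = ⟪x, y⟫ :=
    Real.cos_arccos (neg_le_of_abs_le hxy) (le_of_abs_le hxy)
  have hkernel := one_sub_cos_pow_le (Real.arccos ⟪x, y⟫) k
  rw [hcos] at hkernel
  refine abs_le_of_sq_le_sq ?_
    (mul_nonneg (mul_nonneg (bwNorm_nonneg g) (Real.sqrt_nonneg _)) (Real.arccos_nonneg _))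
  calc (eval (fun j => x j) g - eval (fun j => y j) g) ^ 2
      ≤ bwNorm g ^ 2 * (1 - 2 * ⟪x, y⟫ ^ k + 1) := by
        simpa [EuclideanSpace.sum_mul_eq_inner, real_inner_self_eq_norm_sq, hx, hy]
          using sq_eval_sub_eval_le hg (fun j => x j) (fun j => y j)
    _ ≤ bwNorm g ^ 2 * (k * Real.arccos ⟪x, y⟫ ^ 2) := by gcongr; linarith
    _ = (bwNorm g * Real.sqrt k * Real.arccos ⟪x, y⟫) ^ 2 := by
        rw [mul_pow, mul_pow, Real.sq_sqrt (Nat.cast_nonneg k)]; ring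

/-- Exclusion test: if `f(x) ≠ 0` then `f` has no zero in the open ball
`B(x, r)` (for the angular distance `arccos⟪x,y⟫` on the sphere), with
`r = min{‖f(x)‖_∞/(‖f‖√D), √2}`. -/
theorem stmt_4 (n : ℕ) (hn : 0 < n) (d : Fin n → ℕ)
    (f : Fin n → MvPolynomial (Fin (n + 1)) ℝ)
    (hf : ∀ i, (f i).IsHomogeneous (d i))
    (x : EuclideanSpace ℝ (Fin (n + 1))) (hx : ‖x‖ = 1)
    (hfx : ∃ i, eval (fun j => x j) (f i) ≠ 0)
    (y : EuclideanSpace ℝ (Fin (n + 1))) (hy : ‖y‖ = 1)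
    (hyx : Real.arccos ⟪x, y⟫ <
      min ((Finset.univ.sup' ⟨⟨0, hn⟩, Finset.mem_univ _⟩
              fun i => |eval (fun j => x j) (f i)|) /
            ((Finset.univ.sup' ⟨⟨0, hn⟩, Finset.mem_univ _⟩ fun i => bwNorm (f i)) *
              Real.sqrt ((Finset.univ.sup d : ℕ) : ℝ)))
        (Real.sqrt 2)) :
    ∃ i, eval (fun j => y j) (f i) ≠ 0 := by
  by_contra! hzero
  obtain ⟨i₀, -, hi₀⟩ := exists_mem_eq_sup' ⟨⟨0, hn⟩, mem_univ _⟩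
    fun i => |eval (fun j => x j) (f i)|
  set A := univ.sup' ⟨⟨0, hn⟩, mem_univ _⟩ fun i => |eval (fun j => x j) (f i)|
  set N := univ.sup' ⟨⟨0, hn⟩, mem_univ _⟩ fun i => bwNorm (f i)
  set D : ℝ := ((univ.sup d : ℕ) : ℝ)
  set θ := Real.arccos ⟪x, y⟫
  have hA : 0 < A := hfx.elim fun i hi => (abs_pos.2 hi).trans_le
    (le_sup' (fun i => |eval (fun j => x j) (f i)|) (mem_univ i))
  have hN : bwNorm (f i₀) ≤ N := le_sup' (fun i => bwNorm (f i)) (mem_univ i₀)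
  have hD : (d i₀ : ℝ) ≤ D := Nat.cast_le.2 (le_sup (f := d) (mem_univ i₀))
  have hA_le : A ≤ N * Real.sqrt D * θ := calc
    A = |eval (fun j => x j) (f i₀) - eval (fun j => y j) (f i₀)| := by
      rw [hi₀, hzero, sub_zero]
    _ ≤ bwNorm (f i₀) * Real.sqrt (d i₀) * θ :=
      abs_eval_sub_eval_le_mul_arccos_inner (hf i₀) hx hy
    _ ≤ N * Real.sqrt D * θ := by
      gcongr
      · exact Real.arccos_nonneg _
      · exact (bwNorm_nonneg _).trans hN
  have hθ : θ < A / (N * Real.sqrt D) := hyx.trans_le (min_le_left _ _)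
  rcases (mul_nonneg ((bwNorm_nonneg _).trans hN) (Real.sqrt_nonneg D)).eq_or_lt with h | h
  · rw [← h, zero_mul] at hA_le
    linarith
  · rw [lt_div_iff₀ h] at hθ
    linarith
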